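/- Let R, U, Z be commutative rings, p : R → U surjective, q : R → Z a surjective ring homomorphism, and s : Z → R an additive map such that: (i) s(q(x)·z) = x·s(z); (ii) q∘s is multiplication by a non-zero-divisor c ∈ Z; (iii) ker p = image s. Then for every u ∈ U and z ∈ Z such that q(f) − z ∈ (c) for some f ∈ R with p(f) = u, there exists g ∈ R with p(g) = u and q(g) = z. In particular, R is isomorphic to the fiber product of U and Z over Z/(c). -/

import Mathlib

section Patching

variable {R U Z : Type*} [AddCommGroup R] [AddCommGroup U] [CommRing Z]
  {p : R →+ U} {q : R →+ Z} {s : Z →+ R} {c : Z}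

theorem exists_map_eq_map_and_map_eq_of_sub_mem_span (hps : ∀ w, p (s w) = 0)
    (hqs : ∀ w, q (s w) = c * w) {f : R} {z : Z} (h : q f - z ∈ Ideal.span {c}) :
    ∃ g : R, p g = p f ∧ q g = z := by
  obtain ⟨w, hw⟩ := Ideal.mem_span_singleton.1 h
  refine ⟨f - s w, by rw [map_sub, hps, sub_zero], ?_⟩
  rw [map_sub, hqs, ← hw, sub_sub_cancel]

theorem eq_zero_of_map_eq_zero_of_map_eq_zero (hker : ∀ f, p f = 0 → ∃ w, s w = f)
    (hqs : ∀ w, q (s w) = c * w) (hc : c ∈ nonZeroDivisors Z) {f : R}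
    (hpf : p f = 0) (hqf : q f = 0) : f = 0 := by
  obtain ⟨w, rfl⟩ := hker f hpf
  have hw : w = 0 := hc.2 w (by rw [mul_comm, ← hqs, hqf])
  rw [hw, map_zero]

end Patching

theorem stmt13_general {R U Z : Type*} [CommRing R] [CommRing U] [CommRing Z]
    (p : R →+* U) (q : R →+* Z) (s : Z →+ R) (c : Z)
    (hc : c ∈ nonZeroDivisors Z)
    (hqs : ∀ z : Z, q (s z) = c * z)
    (hker : ∀ f : R, p f = 0 ↔ ∃ z : Z, s z = f) :
    (∀ (u : U) (z : Z), (∃ f : R, p f = u ∧ q f - z ∈ Ideal.span {c}) →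
        ∃ g : R, p g = u ∧ q g = z) ∧
      ∀ f g : R, p f = p g → q f = q g → f = g := by
  refine ⟨?_, fun f g hpfg hqfg => ?_⟩
  · rintro u z ⟨f, rfl, hf⟩
    exact exists_map_eq_map_and_map_eq_of_sub_mem_span (p := p.toAddMonoidHom)
      (q := q.toAddMonoidHom) (fun w => (hker _).2 ⟨w, rfl⟩) hqs hf
  · refine sub_eq_zero.1 (eq_zero_of_map_eq_zero_of_map_eq_zero (p := p.toAddMonoidHom)
      (q := q.toAddMonoidHom) (fun f => (hker f).1) hqs hc ?_ ?_)
    · simp [hpfg]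
    · simp [hqfg]

/-- Abstract form of the patching lemma: with `p` and `q` surjective, every pair
`(u, z)` compatible modulo `(c)` lifts to a single element of `R`; together with
injectivity this identifies `R` with the fiber product `U ×_{Z/(c)} Z`. -/
theorem stmt13 {R U Z : Type*} [CommRing R] [CommRing U] [CommRing Z]
    (p : R →+* U) (q : R →+* Z) (s : Z →+ R) (c : Z)
    (hc : c ∈ nonZeroDivisors Z)
    (hp : Function.Surjective p) (hq : Function.Surjective q)
    (hproj : ∀ (x : R) (z : Z), s (q x * z) = x * s z)
    (hqs : ∀ z : Z, q (s z) = c * z)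
    (hker : ∀ f : R, p f = 0 ↔ ∃ z : Z, s z = f) :
    (∀ (u : U) (z : Z), (∃ f : R, p f = u ∧ q f - z ∈ Ideal.span {c}) →
        ∃ g : R, p g = u ∧ q g = z) ∧
      ∀ f g : R, p f = p g → q f = q g → f = g :=
  stmt13_general p q s c hc hqs hker
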